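/- Let S be a finite set of open unit hemispheres. If the union of S covers a closed unit hemisphere H̄ of the unit sphere S^2, then there exists a subset R of S of cardinality 3, 4, or 5 whose union still covers H̄. -/

import Mathlib

open scoped RealInnerProductSpace

/-- The unit sphere `S² ⊆ ℝ³`. -/
noncomputable def unitSphere : Set (EuclideanSpace ℝ (Fin 3)) := Metric.sphere 0 1

/-- The open unit hemisphere of `S²` determined by a (unit) vector `v`. -/
noncomputable def openHemisphere (v : EuclideanSpace ℝ (Fin 3)) :
    Set (EuclideanSpace ℝ (Fin 3)) := {x ∈ unitSphere | 0 < ⟪v, x⟫}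

/-- The closed unit hemisphere of `S²` determined by a (unit) vector `v`. -/
noncomputable def closedHemisphere (v : EuclideanSpace ℝ (Fin 3)) :
    Set (EuclideanSpace ℝ (Fin 3)) := {x ∈ unitSphere | 0 ≤ ⟪v, x⟫}

/-!
The closed hemisphere of `u` is covered by the open hemispheres of `S` exactly when no nonzero `x`
has `⟪-u, x⟫ ≤ 0` and `⟪v, x⟫ ≤ 0` for all `v ∈ S`, i.e. when `-u` and `S` positively span `ℝ³`.
Steinitz's argument then keeps `-u` and at most five members of `S`. More generally, let `a` and `A`
positively span a subspace `K` of dimension `d` after projection to `K`, with `a` not orthogonal to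
`K`. By Farkas' lemma `-a` is a positive combination of the projections of `A`, and by Carathéodory
of `k ≥ 1` linearly independent ones, coming from `B ⊆ A`. Any witness against `a` and `B` lies in
`K ⊓ (span B)ᗮ`, of dimension `d - k`, where `2 (d - k)` members of `A` suffice by induction; so `a`
and at most `2 d - 1` members of `A` suffice. Padding with further members of `S` reaches three,
since a positively spanning family of `ℝ³` has at least four members.
-/

open Module Submodule

variable {ι M : Type*} [AddCommGroup M] [Module ℝ M]

/-- Subtracting from the coefficients the largest multiple of a linear dependency that keeps them
nonnegative makes one of them vanish. -/
theorem exists_nonneg_sum_eq_of_not_linearIndepOn {φ : ι → M} {T : Finset ι}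
    {f : ι → ℝ} (hf : ∀ i ∈ T, 0 ≤ f i) (hT : ¬LinearIndepOn ℝ φ T) :
    ∃ i₀ ∈ T, ∃ f' : ι → ℝ, (∀ i ∈ T, 0 ≤ f' i) ∧ f' i₀ = 0 ∧
      ∑ i ∈ T, f' i • φ i = ∑ i ∈ T, f i • φ i := by
  obtain ⟨G, hG, hGpos⟩ : ∃ G : ι → ℝ, ∑ i ∈ T, G i • φ i = 0 ∧ ∃ i ∈ T, 0 < G i := by
    obtain ⟨G, hG, i, hi, hGi⟩ := not_linearIndepOn_finset_iff.mp hT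
    rcases hGi.lt_or_gt with hneg | hpos
    · exact ⟨-G, by simp [neg_smul, hG], i, hi, by simpa using hneg⟩
    · exact ⟨G, hG, i, hi, hpos⟩
  classical
  obtain ⟨i₀, hi₀, hmin⟩ := Finset.exists_min_image (T.filter (0 < G ·)) (fun i => f i / G i)
    (by simpa [Finset.Nonempty] using hGpos)
  rw [Finset.mem_filter] at hi₀
  set r := f i₀ / G i₀
  have hr : 0 ≤ r := div_nonneg (hf i₀ hi₀.1) hi₀.2.le
  refine ⟨i₀, hi₀.1, fun i => f i - r * G i, fun i hi => ?_, ?_, ?_⟩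
  · rcases lt_or_ge 0 (G i) with hGi | hGi
    · have := hmin i (Finset.mem_filter.mpr ⟨hi, hGi⟩)
      rw [le_div_iff₀ hGi] at this
      linarith
    · nlinarith [hf i hi]
  · simp [r, hi₀.2.ne']
  · simp only [sub_smul, Finset.sum_sub_distrib, mul_smul, ← Finset.smul_sum, hG, smul_zero,
      sub_zero]

theorem exists_linearIndepOn_pos_sum_eq (φ : ι → M) (T : Finset ι) (f : ι → ℝ)
    (hf : ∀ i ∈ T, 0 ≤ f i) :
    ∃ T' ⊆ T, LinearIndepOn ℝ φ T' ∧
      ∃ g : ι → ℝ, (∀ i ∈ T', 0 < g i) ∧ ∑ i ∈ T', g i • φ i = ∑ i ∈ T, f i • φ i := by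
  classical
  induction T using Finset.strongInduction generalizing f with
  | H T ih =>
  by_cases hdone : LinearIndepOn ℝ φ T ∧ ∀ i ∈ T, 0 < f i
  · exact ⟨T, subset_rfl, hdone.1, f, hdone.2, rfl⟩
  obtain ⟨i₀, hi₀, f', hf', hf'i₀, hsum⟩ : ∃ i₀ ∈ T, ∃ f' : ι → ℝ, (∀ i ∈ T, 0 ≤ f' i) ∧
      f' i₀ = 0 ∧ ∑ i ∈ T, f' i • φ i = ∑ i ∈ T, f i • φ i := by
    rcases not_and_or.mp hdone with hdep | hzero
    · exact exists_nonneg_sum_eq_of_not_linearIndepOn hf hdep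
    · simp only [not_forall, not_lt] at hzero
      obtain ⟨i₀, hi₀, hfi₀⟩ := hzero
      exact ⟨i₀, hi₀, f, hf, hfi₀.antisymm (hf i₀ hi₀), rfl⟩
  obtain ⟨T', hT', hind, g, hg, hgsum⟩ := ih (T.erase i₀) (Finset.erase_ssubset hi₀) f'
    fun i hi => hf' i (Finset.mem_of_mem_erase hi)
  refine ⟨T', hT'.trans (Finset.erase_subset _ _), hind, g, hg, ?_⟩
  rw [hgsum, Finset.sum_erase _ (by simp [hf'i₀]), hsum]

namespace PointedCone

theorem mem_hull_image_finset_iff {φ : ι → M} {T : Finset ι} {x : M} :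
    x ∈ hull ℝ (φ '' T) ↔ ∃ f : ι → ℝ, (∀ i ∈ T, 0 ≤ f i) ∧ ∑ i ∈ T, f i • φ i = x := by
  rw [Submodule.mem_span_image_finset_iff_exists_fun']
  constructor
  · rintro ⟨c, rfl⟩
    exact ⟨fun i => c i, fun i _ => (c i).2, by simp⟩
  · rintro ⟨f, hf, rfl⟩
    refine ⟨fun i => ⟨max (f i) 0, le_max_right _ _⟩, Finset.sum_congr rfl fun i hi => ?_⟩
    rw [Nonneg.mk_smul, max_eq_left (hf i hi)]

theorem mem_hull_range_iff [Fintype ι] {φ : ι → M} {x : M} :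
    x ∈ hull ℝ (Set.range φ) ↔ ∃ g : ι → ℝ, 0 ≤ g ∧ Fintype.linearCombination ℝ φ g = x := by
  rw [← Set.image_univ, ← Finset.coe_univ, mem_hull_image_finset_iff]
  simp [Fintype.linearCombination_apply, Pi.le_def]

section Closed

variable {E : Type*} [NormedAddCommGroup E] [NormedSpace ℝ E]

theorem isClosed_hull_range_of_linearIndependent [Finite ι] {φ : ι → E}
    (hφ : LinearIndependent ℝ φ) : IsClosed (hull ℝ (Set.range φ) : Set E) := by
  have := Fintype.ofFinite ι
  have himage : (hull ℝ (Set.range φ) : Set E) = Fintype.linearCombination ℝ φ '' Set.Ici 0 := by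
    ext x; simp [mem_hull_range_iff]
  rw [himage]
  exact (LinearMap.isClosedEmbedding_of_injective (LinearMap.ker_eq_bot.mpr
    hφ.fintypeLinearCombination_injective)).isClosedMap _ isClosed_Ici

/-- By Carathéodory, the cone is the finite union of the cones over its linearly independent
subfamilies. -/
theorem isClosed_hull_image_finset (φ : ι → E) (T : Finset ι) :
    IsClosed (hull ℝ (φ '' T) : Set E) := by
  classical
  have hunion : (hull ℝ (φ '' T) : Set E) =
      ⋃ (T' : Finset ι) (_ : T' ∈ T.powerset.filter fun T' : Finset ι => LinearIndepOn ℝ φ T'),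
        (hull ℝ (φ '' T') : Set E) := by
    ext x
    simp only [Set.mem_iUnion₂, Finset.mem_filter, Finset.mem_powerset, exists_prop]
    constructor
    · intro hx
      obtain ⟨f, hf, rfl⟩ := mem_hull_image_finset_iff.mp hx
      obtain ⟨T', hT', hind, g, hg, hgsum⟩ := exists_linearIndepOn_pos_sum_eq φ T f hf
      exact ⟨T', ⟨hT', hind⟩, mem_hull_image_finset_iff.mpr ⟨g, fun i hi => (hg i hi).le, hgsum⟩⟩
    · rintro ⟨T', ⟨hT', -⟩, hx⟩
      exact Submodule.span_mono (Set.image_mono (Finset.coe_subset.mpr hT')) hx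
  rw [hunion]
  refine isClosed_biUnion_finset fun T' hT' => ?_
  rw [Set.image_eq_range]
  exact isClosed_hull_range_of_linearIndependent (Finset.mem_filter.mp hT').2

end Closed

theorem hyperplane_separation_image_finset {E : Type*} [NormedAddCommGroup E]
    [InnerProductSpace ℝ E] [CompleteSpace E] (φ : ι → E) (T : Finset ι) {z : E}
    (hz : z ∉ hull ℝ (φ '' T)) : ∃ y, (∀ i ∈ T, 0 ≤ ⟪φ i, y⟫) ∧ ⟪z, y⟫ < 0 := by
  obtain ⟨y, hy, hzy⟩ :=
    ProperCone.hyperplane_separation' ⟨hull ℝ (φ '' T), isClosed_hull_image_finset φ T⟩ hz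
  exact ⟨y, fun i hi => hy _ (subset_hull (Set.mem_image_of_mem φ hi)), hzy⟩

end PointedCone

theorem Finset.eq_zero_of_sum_mul_nonneg {B : Finset ι} {g t : ι → ℝ} (hg : ∀ i ∈ B, 0 < g i)
    (ht : ∀ i ∈ B, t i ≤ 0) (hsum : 0 ≤ ∑ i ∈ B, g i * t i) : ∀ i ∈ B, t i = 0 := by
  have hterm : ∀ i ∈ B, g i * t i ≤ 0 := fun i hi =>
    mul_nonpos_of_nonneg_of_nonpos (hg i hi).le (ht i hi)
  have hzero := (Finset.sum_eq_zero_iff_of_nonpos hterm).mp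
    (le_antisymm (Finset.sum_nonpos hterm) hsum)
  exact fun i hi => (mul_eq_zero.mp (hzero i hi)).resolve_left (hg i hi).ne'

section

variable {E : Type*} [NormedAddCommGroup E] [InnerProductSpace ℝ E]

theorem Submodule.mem_orthogonal_span_iff {s : Set E} {x : E} :
    x ∈ (span ℝ s)ᗮ ↔ ∀ u ∈ s, ⟪u, x⟫ = 0 := by
  refine ⟨fun hx u hu => hx u (subset_span hu), fun h => ?_⟩
  have hle : span ℝ s ≤ LinearMap.ker (innerₗ E x) :=
    span_le.mpr fun u hu => by simpa [real_inner_comm] using h u hu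
  exact fun u hu => by simpa [real_inner_comm] using hle hu

theorem Submodule.inner_starProjection_left_of_mem (K : Submodule ℝ E)
    [K.HasOrthogonalProjection] (v : E) {x : E} (hx : x ∈ K) :
    ⟪K.starProjection v, x⟫ = ⟪v, x⟫ := by
  rw [inner_starProjection_left_eq_right, starProjection_eq_self_iff.mpr hx]

theorem inner_nonpos_iff_mem_orthogonal_span {K : Submodule ℝ E} [K.HasOrthogonalProjection]
    {a x : E} {B : Finset E} {g : E → ℝ} (hg : ∀ v ∈ B, 0 < g v)
    (hgsum : ∑ v ∈ B, g v • K.starProjection v = -K.starProjection a) (hx : x ∈ K)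
    (hBx : ∀ v ∈ B, ⟪v, x⟫ ≤ 0) :
    ⟪a, x⟫ ≤ 0 ↔ x ∈ (span ℝ (K.starProjection '' B))ᗮ := by
  have hax : ⟪a, x⟫ = -∑ v ∈ B, g v * ⟪v, x⟫ := by
    rw [← K.inner_starProjection_left_of_mem a hx, ← neg_neg (K.starProjection a), ← hgsum,
      inner_neg_left, sum_inner]
    simp only [real_inner_smul_left, K.inner_starProjection_left_of_mem _ hx]
  simp only [mem_orthogonal_span_iff, Set.forall_mem_image, Finset.mem_coe,
    K.inner_starProjection_left_of_mem _ hx]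
  constructor
  · intro hax0
    exact Finset.eq_zero_of_sum_mul_nonneg hg hBx (by linarith)
  · intro hB0
    rw [hax, Finset.sum_eq_zero fun v hv => by rw [hB0 hv, mul_zero], neg_zero]

/-- The dual form of "the orthogonal projections of `A` to `K` positively span `K`". -/
def PositivelySpans (K : Submodule ℝ E) (A : Finset E) : Prop :=
  ∀ x ∈ K, (∀ v ∈ A, ⟪v, x⟫ ≤ 0) → x = 0

namespace PositivelySpans

variable {K : Submodule ℝ E} {a : E} {A B : Finset E}

theorem mono (h : PositivelySpans K A) (hAB : A ⊆ B) : PositivelySpans K B :=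
  fun x hx hB => h x hx fun v hv => hB v (hAB hv)

theorem finrank_lt_card [FiniteDimensional ℝ E] [Nontrivial E] (h : PositivelySpans ⊤ A) :
    finrank ℝ E < A.card := by
  let φ : E →ₗ[ℝ] A → ℝ := LinearMap.pi fun v : A => innerₗ E (v : E)
  have hφ (x : E) (v : A) : φ x v = ⟪(v : E), x⟫ := rfl
  have hinj : Function.Injective φ := by
    rw [← LinearMap.ker_eq_bot, LinearMap.ker_eq_bot']
    exact fun x hx => h x trivial fun v hv => by rw [← hφ x ⟨v, hv⟩, hx]; rfl
  have hle : finrank ℝ E ≤ A.card := by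
    simpa using LinearMap.finrank_le_finrank_of_injective hinj
  refine hle.lt_of_ne fun heq => ?_
  obtain ⟨x, hx⟩ := (LinearMap.injective_iff_surjective_of_finrank_eq_finrank
    (by simpa using heq)).mp hinj fun _ => -1
  obtain ⟨v, hv⟩ : A.Nonempty := Finset.card_pos.mp (heq ▸ finrank_pos)
  have hx0 : x = 0 := h x trivial fun w hw => by
    rw [← hφ x ⟨w, hw⟩, hx]
    norm_num
  have := hφ x ⟨v, hv⟩
  rw [hx, hx0, inner_zero_right] at this
  norm_num at this

variable [DecidableEq E]

theorem neg_starProjection_mem_hull [CompleteSpace E] [K.HasOrthogonalProjection]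
    (h : PositivelySpans K (insert a A)) :
    -K.starProjection a ∈ PointedCone.hull ℝ (K.starProjection '' A) := by
  by_contra hnot
  obtain ⟨y, hy, hay⟩ := PointedCone.hyperplane_separation_image_finset _ A hnot
  have hinner (v : E) : ⟪v, -K.starProjection y⟫ = -⟪K.starProjection v, y⟫ := by
    rw [inner_neg_right, inner_starProjection_left_eq_right]
  have hay' : ⟪a, -K.starProjection y⟫ < 0 := by
    rw [hinner]
    rw [inner_neg_left] at hay
    linarith
  have hzero := h _ (K.neg_mem (K.starProjection_apply_mem y)) fun v hv => by
    rcases Finset.mem_insert.mp hv with rfl | hv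
    · exact hay'.le
    · rw [hinner]
      linarith [hy v hv]
  rw [hzero, inner_zero_right] at hay'
  exact lt_irrefl 0 hay'

theorem exists_subset_card_le_of_forall_insert [K.HasOrthogonalProjection]
    (h : PositivelySpans K A)
    (hins : ∀ a ∈ A, K.starProjection a ≠ 0 →
      ∃ R ⊆ A, R.card < 2 * finrank ℝ K ∧ PositivelySpans K (insert a R)) :
    ∃ R ⊆ A, R.card ≤ 2 * finrank ℝ K ∧ PositivelySpans K R := by
  by_cases hA : ∃ a ∈ A, K.starProjection a ≠ 0
  · obtain ⟨a, ha, hPa⟩ := hA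
    obtain ⟨R, hRA, hRcard, hR⟩ := hins a ha hPa
    exact ⟨insert a R, Finset.insert_subset ha hRA,
      (Finset.card_insert_le a R).trans hRcard, hR⟩
  · push Not at hA
    refine ⟨∅, Finset.empty_subset A, Nat.zero_le _, fun x hx _ => h x hx fun v hv => ?_⟩
    rw [← K.inner_starProjection_left_of_mem v hx, hA v hv, inner_zero_left]

variable [FiniteDimensional ℝ E]

theorem exists_subset_card_lt (h : PositivelySpans K (insert a A))
    (ha : K.starProjection a ≠ 0) :
    ∃ R ⊆ A, R.card < 2 * finrank ℝ K ∧ PositivelySpans K (insert a R) := by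
  induction hn : finrank ℝ K using Nat.strong_induction_on generalizing K a A with
  | _ n ih =>
  obtain ⟨f, hf, hfsum⟩ := PointedCone.mem_hull_image_finset_iff.mp h.neg_starProjection_mem_hull
  obtain ⟨B, hBA, hBind, g, hg, hgsum⟩ := exists_linearIndepOn_pos_sum_eq K.starProjection A f hf
  rw [hfsum] at hgsum
  set L := span ℝ (K.starProjection '' B)
  have hLK : L ≤ K :=
    span_le.mpr <| Set.image_subset_iff.mpr fun v _ => K.starProjection_apply_mem v
  have hLrank : finrank ℝ L = B.card := by
    have := finrank_span_eq_card hBind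
    rw [← Set.image_eq_range] at this
    exact this.trans (by simp)
  have hBne : B.Nonempty := by
    refine Finset.nonempty_iff_ne_empty.mpr fun hB => ha ?_
    rw [hB, Finset.sum_empty] at hgsum
    exact neg_eq_zero.mp hgsum.symm
  have hrank := finrank_add_inf_finrank_orthogonal hLK
  have hcut (x : E) (hx : x ∈ K) (hBx : ∀ v ∈ B, ⟪v, x⟫ ≤ 0) :=
    inner_nonpos_iff_mem_orthogonal_span hg hgsum hx hBx
  have h' : PositivelySpans (Lᗮ ⊓ K) A := fun x hx hAx =>
    h x hx.2 <| Finset.forall_mem_insert _ _ _ |>.mpr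
      ⟨(hcut x hx.2 fun v hv => hAx v (hBA hv)).mpr hx.1, hAx⟩
  obtain ⟨R', hR'A, hR'card, hR'⟩ := h'.exists_subset_card_le_of_forall_insert
    fun b hb hPb => ih _ (by rw [← hn, ← hrank, hLrank]; have := hBne.card_pos; omega)
      (by rwa [Finset.insert_eq_of_mem hb]) hPb rfl
  refine ⟨B ∪ R', Finset.union_subset hBA hR'A, ?_, fun x hx hRx => hR' x ⟨?_, hx⟩ ?_⟩
  · have := hBne.card_pos
    have := Finset.card_union_le B R'
    omega
  · exact (hcut x hx fun v hv => hRx v (by simp [hv])).mp (hRx a (Finset.mem_insert_self a _))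
  · exact fun v hv => hRx v (by simp [hv])

end PositivelySpans

end

theorem closedHemisphere_subset_iff_positivelySpans
    (u : EuclideanSpace ℝ (Fin 3)) (R : Finset (EuclideanSpace ℝ (Fin 3))) :
    closedHemisphere u ⊆ ⋃ v ∈ R, openHemisphere v ↔ PositivelySpans ⊤ (insert (-u) R) := by
  constructor
  · intro hcover x _ hx
    by_contra hx0
    have hxnorm : 0 < ‖x‖ := norm_pos_iff.mpr hx0
    have hux : 0 ≤ ⟪u, x⟫ := by
      simpa [inner_neg_left] using hx (-u) (Finset.mem_insert_self _ _)
    have hmem : ‖x‖⁻¹ • x ∈ closedHemisphere u := by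
      refine ⟨?_, ?_⟩
      · simp [unitSphere, norm_smul, hxnorm.ne']
      · rw [real_inner_smul_right]
        positivity
    obtain ⟨v, hv, -, hvx⟩ := Set.mem_iUnion₂.mp (hcover hmem)
    rw [real_inner_smul_right] at hvx
    exact (pos_of_mul_pos_right hvx (inv_nonneg.mpr hxnorm.le)).not_ge
      (hx v (Finset.mem_insert_of_mem hv))
  · rintro h x ⟨hx, hux⟩
    by_contra hnot
    have hx0 : x = 0 := h x trivial fun v hv => by
      rcases Finset.mem_insert.mp hv with rfl | hv
      · rw [inner_neg_left]
        linarith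
      · exact not_lt.mp fun hvx => hnot (Set.mem_iUnion₂.mpr ⟨v, hv, hx, hvx⟩)
    simp [unitSphere, hx0] at hx

theorem hemispheres_cover_closed_hemisphere_general
    (S : Finset (EuclideanSpace ℝ (Fin 3)))
    (u : EuclideanSpace ℝ (Fin 3)) (hu : ‖u‖ = 1)
    (hcover : closedHemisphere u ⊆ ⋃ v ∈ S, openHemisphere v) :
    ∃ R ⊆ S, (R.card = 3 ∨ R.card = 4 ∨ R.card = 5) ∧
      closedHemisphere u ⊆ ⋃ v ∈ R, openHemisphere v := by
  have hS := (closedHemisphere_subset_iff_positivelySpans u S).mp hcover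
  have hPu : (⊤ : Submodule ℝ _).starProjection (-u) ≠ 0 := by
    simp [starProjection_top, ← norm_ne_zero_iff, hu]
  obtain ⟨R₀, hR₀S, hR₀card, hR₀⟩ := hS.exists_subset_card_lt hPu
  rw [finrank_top, finrank_euclideanSpace_fin] at hR₀card
  have hScard : 3 ≤ S.card := by
    have hlt := hS.finrank_lt_card
    rw [finrank_euclideanSpace_fin] at hlt
    have := Finset.card_insert_le (-u) S
    omega
  obtain ⟨R, hR₀R, hRS, hRcard⟩ := Finset.exists_subsuperset_card_eq hR₀S
    (le_max_left R₀.card 3) (max_le (Finset.card_le_card hR₀S) hScard)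
  refine ⟨R, hRS, by omega, (closedHemisphere_subset_iff_positivelySpans u R).mpr ?_⟩
  exact hR₀.mono (Finset.insert_subset_insert _ hR₀R)

/-- If a finite set of open unit hemispheres covers a closed unit hemisphere,
then three, four or five of them already cover it. -/
theorem hemispheres_cover_closed_hemisphere
    (S : Finset (EuclideanSpace ℝ (Fin 3))) (hS : ∀ v ∈ S, ‖v‖ = 1)
    (u : EuclideanSpace ℝ (Fin 3)) (hu : ‖u‖ = 1)
    (hcover : closedHemisphere u ⊆ ⋃ v ∈ S, openHemisphere v) :
    ∃ R ⊆ S, (R.card = 3 ∨ R.card = 4 ∨ R.card = 5) ∧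
      closedHemisphere u ⊆ ⋃ v ∈ R, openHemisphere v :=
  hemispheres_cover_closed_hemisphere_general S u hu hcover
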